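/- arXiv:1606.06235 — 2 statements merged into one kernel-verified Lean document; each statement's English description precedes it below -/
import Mathlib

section
/- Let p > q > 0 be reals and k ≥ 2 an integer. Then (p³ + (k−1)pq²)/(p³ + 3(k−1)pq² + (k−1)(k−2)q³) > p/(p + q(k−1)). -/
theorem triangle_walk_stay_prob_gt (p q : ℝ) (k : ℕ) (hq : 0 < q) (hpq : q < p)
    (hk : 2 ≤ k) :
    (p ^ 3 + (k - 1 : ℝ) * p * q ^ 2) /
        (p ^ 3 + 3 * (k - 1 : ℝ) * p * q ^ 2 + (k - 1 : ℝ) * (k - 2 : ℝ) * q ^ 3) >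
      p / (p + q * (k - 1 : ℝ)) := by
  have hp : 0 < p := hq.trans hpq
  have hm : (1 : ℝ) ≤ (k : ℝ) - 1 := by
    have : (2 : ℝ) ≤ (k : ℝ) := by exact_mod_cast hk
    linarith
  have hd1 : 0 < p ^ 3 + 3 * (k - 1 : ℝ) * p * q ^ 2 + (k - 1 : ℝ) * (k - 2 : ℝ) * q ^ 3 := by
    have h2 : (0 : ℝ) ≤ (k : ℝ) - 2 := by linarith
    positivity
  have hd2 : 0 < p + q * (k - 1 : ℝ) := by positivity
  rw [gt_iff_lt, div_lt_div_iff₀ hd2 hd1]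
  nlinarith [mul_pos (mul_pos hp hq) (pow_pos (sub_pos.2 hpq) 2), hm]
end

section
/- Let G be a finite simple graph, S a set of vertices with 0 < vol₃(S) and every vertex u ∈ S participating in at least one triangle. For the triangle-biased random walk (from u, pick a triangle containing u uniformly at random, then pick one of its other two endpoints uniformly), the probability of leaving S, starting from a vertex u chosen from S with probability t(u)/vol₃(S), equals (t₂(S) + t₁(S))/vol₃(S). -/
open Finset

/-- The number of triangles of `G` containing the vertex `v`. -/
def triCount {V : Type*} [Fintype V] [DecidableEq V] (G : SimpleGraph V)
    [DecidableRel G.Adj] (v : V) : ℕ :=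
  ((G.cliqueFinset 3).filter (fun T => v ∈ T)).card

/-- The number of triangles of `G` having exactly `i` of their vertices in `S`. -/
def triInS {V : Type*} [Fintype V] [DecidableEq V] (G : SimpleGraph V)
    [DecidableRel G.Adj] (i : ℕ) (S : Finset V) : ℕ :=
  ((G.cliqueFinset 3).filter (fun T => (T ∩ S).card = i)).card

/-- The number of triangles of `G` containing `u` with exactly `i` vertices in `S`. -/
def triInSAt {V : Type*} [Fintype V] [DecidableEq V] (G : SimpleGraph V)
    [DecidableRel G.Adj] (i : ℕ) (u : V) (S : Finset V) : ℕ :=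
  ((G.cliqueFinset 3).filter (fun T => u ∈ T ∧ (T ∩ S).card = i)).card

lemma sum_triInSAt {V : Type*} [Fintype V] [DecidableEq V] (G : SimpleGraph V)
    [DecidableRel G.Adj] (i : ℕ) (S : Finset V) :
    ∑ u ∈ S, triInSAt G i u S = i * triInS G i S := by
  have h : ∀ u ∈ S, triInSAt G i u S =
      ∑ T ∈ G.cliqueFinset 3, if u ∈ T ∧ (T ∩ S).card = i then 1 else 0 := by
    intro u _
    rw [triInSAt, Finset.card_filter]
  rw [Finset.sum_congr rfl h, Finset.sum_comm]
  have h2 : ∀ T ∈ G.cliqueFinset 3,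
      (∑ u ∈ S, if u ∈ T ∧ (T ∩ S).card = i then 1 else 0) =
      if (T ∩ S).card = i then (T ∩ S).card else 0 := by
    intro T _
    by_cases hc : (T ∩ S).card = i
    · simp only [hc, and_true, if_true]
      rw [← Finset.card_filter, Finset.filter_mem_eq_inter, Finset.inter_comm]
      exact hc
    · simp [hc]
  rw [Finset.sum_congr rfl h2, ← Finset.sum_filter]
  rw [triInS, Finset.card_eq_sum_ones, Finset.mul_sum]
  apply Finset.sum_congr rfl
  intro T hT
  simp only [Finset.mem_filter] at hT
  rw [hT.2, mul_one]

theorem triangle_walk_escape_probability {V : Type*} [Fintype V] [DecidableEq V]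
    (G : SimpleGraph V) [DecidableRel G.Adj] (S : Finset V)
    (hvol : 0 < ∑ u ∈ S, triCount G u)
    (htri : ∀ u ∈ S, 0 < triCount G u) :
    ∑ u ∈ S, ((triCount G u : ℝ) / (∑ v ∈ S, triCount G v : ℕ)) *
        (((1 / 2) * (triInSAt G 2 u S : ℝ) + (triInSAt G 1 u S : ℝ)) / (triCount G u : ℝ)) =
      ((triInS G 2 S : ℝ) + (triInS G 1 S : ℝ)) / (∑ u ∈ S, triCount G u : ℕ) := by
  have hvol' : ((∑ v ∈ S, triCount G v : ℕ) : ℝ) ≠ 0 := by positivity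
  have step : ∀ u ∈ S, ((triCount G u : ℝ) / (∑ v ∈ S, triCount G v : ℕ)) *
      (((1 / 2) * (triInSAt G 2 u S : ℝ) + (triInSAt G 1 u S : ℝ)) / (triCount G u : ℝ)) =
      ((1 / 2) * (triInSAt G 2 u S : ℝ) + (triInSAt G 1 u S : ℝ)) /
        (∑ v ∈ S, triCount G v : ℕ) := by
    intro u hu
    have ht : (triCount G u : ℝ) ≠ 0 := by
      exact_mod_cast (htri u hu).ne'
    rw [div_mul_div_comm, mul_comm ((∑ v ∈ S, triCount G v : ℕ) : ℝ),
      mul_div_mul_left _ _ ht]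
  rw [Finset.sum_congr rfl step, ← Finset.sum_div]
  congr 1
  rw [Finset.sum_add_distrib, ← Finset.mul_sum]
  have h2 := sum_triInSAt G 2 S
  have h1 := sum_triInSAt G 1 S
  have h2' : (∑ u ∈ S, (triInSAt G 2 u S : ℝ)) = 2 * triInS G 2 S := by
    exact_mod_cast congrArg (Nat.cast : ℕ → ℝ) h2
  have h1' : (∑ u ∈ S, (triInSAt G 1 u S : ℝ)) = triInS G 1 S := by
    rw [← Nat.cast_sum, h1]; push_cast; ring
  rw [h2', h1']
  ring
end
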